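/- Let r > 0 and 0 < p < 1, and let NB(r,p) denote the negative binomial distribution on ℕ with point probabilities C(k+r−1, k)(1−p)^r p^k, whose mean is m := rp/(1−p). For every probability measure P on ℕ with finite mean E := Σ_k k·P({k}) such that E ≤ m, one has D(P‖NB(r,p)) ≥ (E − m)² / (2·(m/r)·(m + r)). (For r = 1 this gives the corresponding bound for the geometric distribution.) -/

import Mathlib

open MeasureTheory ProbabilityTheory Real

/- Kullback-Leibler divergence `D(P‖Q)`: equal to `∫ log(dP/dQ) dP` when `P ≪ Q` and the
integrand is `P`-integrable, and `+∞` otherwise. -/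
open Classical in
noncomputable def klDiv {Ω : Type*} [MeasurableSpace Ω] (P Q : Measure Ω) : EReal :=
  if P ≪ Q ∧ Integrable (fun ω => Real.log (P.rnDeriv Q ω).toReal) P
  then ((∫ ω, Real.log (P.rnDeriv Q ω).toReal ∂P : ℝ) : EReal)
  else ⊤

/-- The negative binomial distribution on ℕ with parameters r > 0 and p ∈ (0,1),
with point probabilities C(k+r-1,k) (1-p)^r p^k where C(k+r-1,k) = Γ(k+r)/(Γ(r) k!). -/
noncomputable def negBinMeasure (r p : ℝ) : Measure ℕ :=
  Measure.sum (fun k : ℕ =>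
    ENNReal.ofReal (Real.Gamma (k + r) / (Real.Gamma r * (Nat.factorial k : ℝ)) *
      (1 - p) ^ r * p ^ k) • Measure.dirac k)

/-!
Donsker–Varadhan: for every `λ`, `D(P‖Q) ≥ λ E - log 𝔼_Q[e^{λ k}]`, because the KL divergence
from `P` to the tilted measure `Q e^{λ k} / 𝔼_Q[e^{λ k}]` is nonnegative. For the negative binomial
law the cumulant generating function is `r log (1 - p) - r log (1 - p e^λ)`, and for `λ ≤ 0` it is
at most `m λ + V λ² / 2` with `V = r p / (1 - p)²`. Taking `λ = (E - m) / V ≤ 0` gives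
`D(P‖Q) ≥ (E - m)² / (2 V)`, and `V = (m / r) (m + r)`.
-/

namespace MeasureTheory

variable {α : Type*} [MeasurableSpace α] {μ ν : Measure α} {f : α → ℝ}

theorem integral_sub_log_integral_exp_le_integral_llr [IsProbabilityMeasure μ] [SigmaFinite ν]
    (hμν : μ ≪ ν) (h_int : Integrable (llr μ ν) μ) (hfμ : Integrable f μ)
    (hfν : Integrable (fun x ↦ exp (f x)) ν) :
    ∫ x, f x ∂μ - log (∫ x, exp (f x) ∂ν) ≤ ∫ x, llr μ ν x ∂μ := by
  have : NeZero ν := ⟨fun h ↦ IsProbabilityMeasure.ne_zero μ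
    (Measure.absolutelyContinuous_zero_iff.mp (h ▸ hμν))⟩
  have := isProbabilityMeasure_tilted hfν
  have hgibbs := InformationTheory.integral_llr_add_sub_measure_univ_nonneg
    (hμν.trans (absolutelyContinuous_tilted hfν)) (integrable_llr_tilted_right hμν hfμ h_int hfν)
  rw [integral_llr_tilted_right hμν hfμ hfν h_int] at hgibbs
  simp only [probReal_univ] at hgibbs
  linarith

theorem integrable_of_summable_measureReal_singleton {X : Type*} [MeasurableSpace X] [Countable X]
    [MeasurableSingletonClass X] {μ : Measure X} [IsFiniteMeasure μ] {g : X → ℝ}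
    (hg : Summable fun x ↦ μ.real {x} * ‖g x‖) : Integrable g μ := by
  rw [← Measure.sum_smul_dirac μ]
  exact integrable_sum_dirac (fun _ ↦ measure_ne_top _ _) hg

end MeasureTheory

namespace Real

theorem Gamma_nat_add_eq_ascPochhammer_eval_mul {r : ℝ} (hr : 0 < r) (k : ℕ) :
    Gamma (k + r) = (ascPochhammer ℝ k).eval r * Gamma r := by
  induction k with
  | zero => simp
  | succ k ih =>
    rw [Nat.cast_succ, add_right_comm, Gamma_add_one (by positivity), ih,
      ascPochhammer_succ_right, Polynomial.eval_mul]
    simp only [Polynomial.eval_add, Polynomial.eval_X, Polynomial.eval_natCast]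
    ring

theorem Gamma_nat_add_div_eq_choose {r : ℝ} (hr : 0 < r) (k : ℕ) :
    Gamma (k + r) / (Gamma r * k.factorial) = Ring.choose (r + k - 1) k := by
  rw [Ring.choose_eq_smul, Polynomial.descPochhammer_smeval_eq_ascPochhammer,
    Polynomial.ascPochhammer_smeval_eq_eval, Gamma_nat_add_eq_ascPochhammer_eval_mul hr,
    smul_eq_mul, show r + k - 1 - k + 1 = r by ring]
  have := (Gamma_pos_of_pos hr).ne'
  field_simp

theorem hasSum_choose_add_sub_one_mul_pow (a : ℝ) {x : ℝ} (hx : |x| < 1) :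
    HasSum (fun n : ℕ ↦ Ring.choose (a + n - 1) n * x ^ n) ((1 - x) ^ (-a)) := by
  have h := (one_div_one_sub_rpow_hasFPowerSeriesOnBall_zero a).hasSum (y := x)
    (by simpa [edist_dist, Real.dist_eq] using hx)
  rw [rpow_neg (by linarith [le_abs_self x])]
  simpa [FormalMultilinearSeries.ofScalars_apply_eq, mul_comm] using h

theorem exp_le_one_add_add_sq_div_two {t : ℝ} (ht : t ≤ 0) : exp t ≤ 1 + t + t ^ 2 / 2 := by
  have h := quadratic_le_exp_of_nonneg (neg_nonneg.mpr ht)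
  have hpos : 0 < 1 + -t + (-t) ^ 2 / 2 := by nlinarith
  have hinv : exp t * exp (-t) = 1 := by rw [← exp_add, add_neg_cancel, exp_zero]
  -- `(1 + t + t²/2) (1 - t + t²/2) = 1 + t⁴/4`
  refine le_of_mul_le_mul_right ?_ hpos
  nlinarith [mul_le_mul_of_nonneg_left h (exp_pos t).le, pow_nonneg (sq_nonneg t) 2]

theorem sub_sq_div_two_le_log_one_add {y : ℝ} (hy : 0 ≤ y) : y - y ^ 2 / 2 ≤ log (1 + y) := by
  refine le_trans ?_ (le_log_one_add_of_nonneg hy)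
  rw [le_div_iff₀ (by linarith)]
  nlinarith [pow_nonneg hy 3]

end Real

noncomputable def negBinWeight (r p : ℝ) (k : ℕ) : ℝ :=
  Gamma (k + r) / (Gamma r * (Nat.factorial k : ℝ)) * (1 - p) ^ r * p ^ k

theorem negBinMeasure_eq_sum (r p : ℝ) :
    negBinMeasure r p = Measure.sum fun k ↦ ENNReal.ofReal (negBinWeight r p k) • Measure.dirac k :=
  rfl

section NegativeBinomial

variable {r p t : ℝ}

theorem negBinWeight_nonneg (hr : 0 < r) (hp0 : 0 ≤ p) (hp1 : p ≤ 1) (k : ℕ) :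
    0 ≤ negBinWeight r p k := by
  have := Gamma_pos_of_pos hr
  have := Gamma_pos_of_pos (by positivity : (0 : ℝ) < k + r)
  have := rpow_nonneg (sub_nonneg.mpr hp1) r
  unfold negBinWeight
  positivity

theorem hasSum_negBinWeight_mul_exp (hr : 0 < r) (hp0 : 0 ≤ p) (hpt : p * exp t < 1) :
    HasSum (fun k ↦ negBinWeight r p k * exp (t * k)) ((1 - p) ^ r * (1 - p * exp t) ^ (-r)) := by
  have h := (hasSum_choose_add_sub_one_mul_pow r (x := p * exp t)
    (abs_lt.mpr ⟨by nlinarith [exp_pos t], hpt⟩)).mul_left ((1 - p) ^ r)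
  refine h.congr_fun fun k ↦ ?_
  unfold negBinWeight
  rw [Gamma_nat_add_div_eq_choose hr, mul_pow, ← exp_nat_mul, mul_comm t]
  ring

theorem isProbabilityMeasure_negBinMeasure (hr : 0 < r) (hp0 : 0 ≤ p) (hp1 : p < 1) :
    IsProbabilityMeasure (negBinMeasure r p) := by
  have h := hasSum_negBinWeight_mul_exp (t := 0) hr hp0 (by simpa using hp1)
  simp only [zero_mul, exp_zero, mul_one] at h
  rw [← rpow_add (by linarith), add_neg_cancel, rpow_zero] at h
  constructor
  rw [negBinMeasure_eq_sum, Measure.sum_apply _ MeasurableSet.univ]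
  simp only [Measure.smul_apply, Measure.dirac_apply_of_mem (Set.mem_univ _), smul_eq_mul, mul_one]
  rw [← ENNReal.ofReal_tsum_of_nonneg (negBinWeight_nonneg hr hp0 hp1.le) h.summable, h.tsum_eq,
    ENNReal.ofReal_one]

theorem integrable_and_integral_exp_mul_negBinMeasure (hr : 0 < r) (hp0 : 0 ≤ p) (hp1 : p < 1)
    (hpt : p * exp t < 1) :
    Integrable (fun k : ℕ ↦ exp (t * k)) (negBinMeasure r p) ∧
      ∫ k, exp (t * k) ∂negBinMeasure r p = (1 - p) ^ r * (1 - p * exp t) ^ (-r) := by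
  have h := hasSum_negBinWeight_mul_exp hr hp0 hpt
  have hsummable : Summable fun k : ℕ ↦
      (ENNReal.ofReal (negBinWeight r p k)).toReal * ‖exp (t * k)‖ := by
    refine h.summable.congr fun k ↦ ?_
    rw [ENNReal.toReal_ofReal (negBinWeight_nonneg hr hp0 hp1.le k), norm_of_nonneg (exp_pos _).le]
  rw [negBinMeasure_eq_sum]
  refine ⟨integrable_sum_dirac (fun _ ↦ ENNReal.ofReal_ne_top) hsummable,
    (hasSum_integral_sum_dirac (x := fun k ↦ k) (fun _ ↦ ENNReal.ofReal_ne_top) hsummable).unique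
      (h.congr_fun fun k ↦ ?_)⟩
  rw [ENNReal.toReal_ofReal (negBinWeight_nonneg hr hp0 hp1.le k), smul_eq_mul]

theorem log_negBin_mgf_le (hr : 0 ≤ r) (hp0 : 0 ≤ p) (hp1 : p < 1) (ht : t ≤ 0) :
    log ((1 - p) ^ r * (1 - p * exp t) ^ (-r))
      ≤ r * p / (1 - p) * t + r * p / (1 - p) ^ 2 * t ^ 2 / 2 := by
  -- After `log (1 + y) ≥ y - y²/2` and `e^t - 1 ≤ t + t²/2` the bound is polynomial in `a`, `u`, `t`.
  have h1p : 0 < 1 - p := by linarith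
  set a := p / (1 - p) with ha
  have ha0 : 0 ≤ a := div_nonneg hp0 h1p.le
  set u := 1 - exp t with hu
  have hu0 : 0 ≤ u := sub_nonneg.mpr (exp_le_one_iff.mpr ht)
  have hut : u ≤ -t := by linarith [add_one_le_exp t]
  have hut' : -u ≤ t + t ^ 2 / 2 := by linarith [exp_le_one_add_add_sq_div_two ht]
  have hau : 0 ≤ a * u := mul_nonneg ha0 hu0
  have hlog : log ((1 - p) ^ r * (1 - p * exp t) ^ (-r)) = -(r * log (1 + a * u)) := by
    have hfactor : 1 - p * exp t = (1 - p) * (1 + a * u) := by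
      rw [ha, hu]
      field_simp
      ring
    rw [hfactor, log_mul (by positivity) (by positivity), log_rpow h1p, log_rpow (by positivity),
      log_mul h1p.ne' (by positivity)]
    ring
  have hquad : -(a * u) + (a * u) ^ 2 / 2 ≤ a * t + a * (1 + a) * t ^ 2 / 2 := by
    nlinarith [mul_le_mul_of_nonneg_left hut' ha0, mul_self_le_mul_self hu0 hut,
      mul_le_mul_of_nonneg_left (mul_self_le_mul_self hu0 hut) (mul_nonneg ha0 ha0)]
  have hcoef : r * p / (1 - p) * t + r * p / (1 - p) ^ 2 * t ^ 2 / 2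
      = r * (a * t + a * (1 + a) * t ^ 2 / 2) := by
    rw [ha]
    field_simp
    ring
  rw [hlog, hcoef]
  nlinarith [mul_le_mul_of_nonneg_left (sub_sq_div_two_le_log_one_add hau) hr,
    mul_le_mul_of_nonneg_left hquad hr]

theorem exists_nonpos_sq_div_le_mul_sub_log_negBin_mgf (hr : 0 < r) (hp0 : 0 < p) (hp1 : p < 1)
    {E : ℝ} (hE : E ≤ r * p / (1 - p)) :
    ∃ t ≤ 0, (E - r * p / (1 - p)) ^ 2 / (2 * (r * p / (1 - p) / r) * (r * p / (1 - p) + r))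
      ≤ t * E - log ((1 - p) ^ r * (1 - p * exp t) ^ (-r)) := by
  have h1p : 0 < 1 - p := by linarith
  set m := r * p / (1 - p)
  set V := r * p / (1 - p) ^ 2
  have hV : m / r * (m + r) = V := by
    simp only [m, V]
    field_simp
    ring
  have hV0 : 0 < V := by positivity
  set t := (E - m) / V
  have ht : t ≤ 0 := div_nonpos_of_nonpos_of_nonneg (sub_nonpos.mpr hE) hV0.le
  have hcgf : log ((1 - p) ^ r * (1 - p * exp t) ^ (-r)) ≤ m * t + V * t ^ 2 / 2 :=
    log_negBin_mgf_le hr.le hp0.le hp1 ht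
  have hopt : (E - m) ^ 2 / (2 * (m / r) * (m + r)) = t * E - (m * t + V * t ^ 2 / 2) := by
    rw [mul_assoc, hV]
    simp only [t]
    field_simp
    ring
  exact ⟨t, ht, by rw [hopt]; linarith⟩

end NegativeBinomial

theorem stmt_8
    (r p : ℝ) (hr : 0 < r) (hp0 : 0 < p) (hp1 : p < 1)
    (P : Measure ℕ) [IsProbabilityMeasure P]
    (hsum : Summable (fun k : ℕ => (k : ℝ) * (P {k}).toReal))
    (hE : ∑' k : ℕ, (k : ℝ) * (P {k}).toReal ≤ r * p / (1 - p)) :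
    ((((∑' k : ℕ, (k : ℝ) * (P {k}).toReal) - r * p / (1 - p)) ^ 2 /
        (2 * (r * p / (1 - p) / r) * (r * p / (1 - p) + r)) : ℝ) : EReal)
      ≤ klDiv P (negBinMeasure r p) := by
  have := isProbabilityMeasure_negBinMeasure hr hp0.le hp1
  obtain ⟨t, ht, hbound⟩ := exists_nonpos_sq_div_le_mul_sub_log_negBin_mgf hr hp0 hp1 hE
  have hmgf := integrable_and_integral_exp_mul_negBinMeasure hr hp0.le hp1
    (by nlinarith [exp_le_one_iff.mpr ht, exp_pos t] : p * exp t < 1)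
  have hmean : Integrable (fun k : ℕ ↦ (k : ℝ)) P :=
    integrable_of_summable_measureReal_singleton
      (hsum.congr fun k ↦ by rw [measureReal_def, norm_natCast, mul_comm])
  have hmean_eq : ∫ k, (k : ℝ) ∂P = ∑' k : ℕ, (k : ℝ) * (P {k}).toReal := by
    rw [integral_countable hmean]
    exact tsum_congr fun k ↦ by rw [measureReal_def, smul_eq_mul, mul_comm]
  unfold klDiv
  split_ifs with hPQ
  · have hDV := integral_sub_log_integral_exp_le_integral_llr hPQ.1 hPQ.2 (hmean.const_mul t)
      hmgf.1
    rw [hmgf.2, integral_const_mul, hmean_eq] at hDV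
    exact EReal.coe_le_coe_iff.mpr (hbound.trans hDV)
  · exact le_top
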